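/- Every connected star graph on at least three vertices has minimum degree at least two. -/

import Mathlib

open SimpleGraph

/-- An induced star of `H` with center `v` and leaf set `L`: `L` is a nonempty
independent set of neighbors of `v`. -/
def IsStar {V : Type*} (H : SimpleGraph V) (v : V) (L : Set V) : Prop :=
  L.Nonempty ∧ (∀ u ∈ L, H.Adj v u) ∧ ∀ u ∈ L, ∀ w ∈ L, ¬ H.Adj u w

/-- `S` is the vertex set of an induced star of `H`. -/
def IsStarSet {V : Type*} (H : SimpleGraph V) (S : Set V) : Prop :=
  ∃ v L, IsStar H v L ∧ S = insert v L

/-- `S` is the vertex set of a maximal induced star of `H`. -/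
def IsMaxStarSet {V : Type*} (H : SimpleGraph V) (S : Set V) : Prop :=
  IsStarSet H S ∧ ∀ T, IsStarSet H T → S ⊆ T → S = T

/-- The set of (vertex sets of) maximal induced stars of `H`. -/
def maxStars {V : Type*} (H : SimpleGraph V) : Set (Set V) := {S | IsMaxStarSet H S}

/-- The star graph of `H`: the intersection graph of the maximal induced stars of `H`. -/
def starGraph {V : Type*} (H : SimpleGraph V) : SimpleGraph ↥(maxStars H) :=
  SimpleGraph.fromRel fun S T => ((S : Set V) ∩ (T : Set V)).Nonempty

/-!
Let `S` be a vertex of the star graph with a neighbour `T`. Since the star graph is connected and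
has a third vertex, `T` has a neighbour `R ≠ S` or `S` already has a second neighbour, so it
suffices to find a maximal star `Z ∉ {S, T}` meeting `S` when `R` meets `T`. Such a `Z` is any
maximal extension of an induced star `{s, y}` or `{c; s, y}` with `s ∈ S`, `y ∉ S` and `s` or `y`
outside `T`. Let `w` be the center of `T`. If `w ∉ S`, take `y = w`, joined to `S` through the
center of `S` or through a common leaf. If `w ∈ S` and `R` misses `S`, take `s = w` and for `y` a
neighbour in `R` of a vertex `b ∈ R ∩ T`: `b` is a leaf of `T`, so `y ∉ T` by independence.
-/

section

variable {V : Type*} {H : SimpleGraph V}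

lemma isStarSet_triple {c a b : V} (hca : H.Adj c a) (hcb : H.Adj c b) (hab : ¬H.Adj a b) :
    IsStarSet H {c, a, b} :=
  ⟨c, {a, b}, ⟨Set.insert_nonempty _ _, by simp [hca, hcb], by simp [hab, H.adj_comm b a]⟩,
    rfl⟩

lemma isStarSet_pair {a b : V} (h : H.Adj a b) : IsStarSet H {a, b} := by
  simpa using isStarSet_triple h h (H.loopless.irrefl b)

lemma IsStarSet.exists_adj {S : Set V} (hS : IsStarSet H S) {b : V} (hb : b ∈ S) :
    ∃ y ∈ S, H.Adj b y := by
  obtain ⟨c, L, ⟨⟨l, hl⟩, hadj, -⟩, rfl⟩ := hS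
  rcases hb with rfl | hbL
  · exact ⟨l, Set.mem_insert_of_mem _ hl, hadj l hl⟩
  · exact ⟨c, Set.mem_insert _ _, (hadj b hbL).symm⟩

lemma IsStarSet.exists_isMaxStarSet_superset [Finite V] {A : Set V} (hA : IsStarSet H A) :
    ∃ Z, IsMaxStarSet H Z ∧ A ⊆ Z := by
  obtain ⟨Z, ⟨hZ, hAZ⟩, hmax⟩ :=
    (Set.toFinite {B | IsStarSet H B ∧ A ⊆ B}).exists_maximal ⟨A, hA, subset_rfl⟩
  exact ⟨Z, ⟨hZ, fun T hT hZT => hZT.antisymm (hmax ⟨hT, hAZ.trans hZT⟩ hZT)⟩, hAZ⟩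

lemma IsMaxStarSet.not_subset {S T : Set V} (hS : IsMaxStarSet H S) (hT : IsStarSet H T)
    (hST : S ≠ T) : ¬S ⊆ T :=
  fun h => hST (hS.2 T hT h)

lemma exists_maxStar_of_common_adj [Finite V] {S T : Set V} {s y c : V} (hs : s ∈ S)
    (hy : y ∉ S) (hsyT : s ∉ T ∨ y ∉ T) (hcs : H.Adj c s) (hcy : H.Adj c y) :
    ∃ Z, IsMaxStarSet H Z ∧ Z ≠ S ∧ Z ≠ T ∧ (Z ∩ S).Nonempty := by
  obtain ⟨A, hA, hsA, hyA⟩ : ∃ A, IsStarSet H A ∧ s ∈ A ∧ y ∈ A := by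
    by_cases hsy : H.Adj s y
    · exact ⟨{s, y}, isStarSet_pair hsy, by simp, by simp⟩
    · exact ⟨{c, s, y}, isStarSet_triple hcs hcy hsy, by simp, by simp⟩
  obtain ⟨Z, hZ, hAZ⟩ := hA.exists_isMaxStarSet_superset
  refine ⟨Z, hZ, fun h => hy (h ▸ hAZ hyA), ?_, s, hAZ hsA, hs⟩
  rintro rfl
  exact hsyT.elim (· (hAZ hsA)) (· (hAZ hyA))

lemma exists_maxStar_of_center_not_mem [Finite V] {S : Set V} {w : V} {M : Set V}
    (hS : IsMaxStarSet H S) (hT : IsStar H w M) (hST : S ≠ insert w M)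
    (hmeet : (S ∩ insert w M).Nonempty) (hw : w ∉ S) :
    ∃ Z, IsMaxStarSet H Z ∧ Z ≠ S ∧ Z ≠ insert w M ∧ (Z ∩ S).Nonempty := by
  obtain ⟨v, L, hSstar, rfl⟩ := hS.1
  by_cases hv : v ∈ insert w M
  · obtain ⟨s, hsS, hsT⟩ := Set.not_subset.1 (hS.not_subset ⟨w, M, hT, rfl⟩ hST)
    have hsL : s ∈ L := Set.mem_of_mem_insert_of_ne hsS (by rintro rfl; exact hsT hv)
    have hvM : v ∈ M :=
      Set.mem_of_mem_insert_of_ne hv (by rintro rfl; exact hw (Set.mem_insert _ _))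
    exact exists_maxStar_of_common_adj hsS hw (Or.inl hsT) (hSstar.2.1 s hsL) (hT.2.1 v hvM).symm
  · obtain ⟨u, huS, huT⟩ := hmeet
    have huL : u ∈ L := Set.mem_of_mem_insert_of_ne huS (by rintro rfl; exact hv huT)
    have huM : u ∈ M := Set.mem_of_mem_insert_of_ne huT (by rintro rfl; exact hw huS)
    exact exists_maxStar_of_common_adj (Set.mem_insert v L) hw (Or.inl hv)
      (hSstar.2.1 u huL).symm (hT.2.1 u huM).symm

lemma exists_maxStar_of_center_mem [Finite V] {S R : Set V} {w : V} {M : Set V}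
    (hT : IsStar H w M) (hw : w ∈ S) (hR : IsMaxStarSet H R) (hRS : R ≠ S)
    (hRT : R ≠ insert w M) (hmeet : (R ∩ insert w M).Nonempty) :
    ∃ Z, IsMaxStarSet H Z ∧ Z ≠ S ∧ Z ≠ insert w M ∧ (Z ∩ S).Nonempty := by
  by_cases hRS' : (R ∩ S).Nonempty
  · exact ⟨R, hR, hRS, hRT, hRS'⟩
  have hdisj : ∀ z ∈ R, z ∉ S := fun z hzR hzS => hRS' ⟨z, hzR, hzS⟩
  obtain ⟨b, hbR, hbT⟩ := hmeet
  have hbM : b ∈ M := Set.mem_of_mem_insert_of_ne hbT (by rintro rfl; exact hdisj _ hbR hw)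
  obtain ⟨y, hyR, hby⟩ := hR.1.exists_adj hbR
  have hyT : y ∉ insert w M := by
    rintro (rfl | hyM)
    · exact hdisj _ hyR hw
    · exact hT.2.2 b hbM y hyM hby
  exact exists_maxStar_of_common_adj hw (hdisj y hyR) (Or.inr hyT) (hT.2.1 b hbM).symm hby

lemma exists_maxStar_inter_nonempty [Finite V] {S T R : Set V} (hS : IsMaxStarSet H S)
    (hT : IsStarSet H T) (hR : IsMaxStarSet H R) (hST : S ≠ T) (hRS : R ≠ S) (hRT : R ≠ T)
    (hST' : (S ∩ T).Nonempty) (hRT' : (R ∩ T).Nonempty) :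
    ∃ Z, IsMaxStarSet H Z ∧ Z ≠ S ∧ Z ≠ T ∧ (Z ∩ S).Nonempty := by
  obtain ⟨w, M, hTstar, rfl⟩ := hT
  by_cases hw : w ∈ S
  · exact exists_maxStar_of_center_mem hTstar hw hR hRS hRT hRT'
  · exact exists_maxStar_of_center_not_mem hS hTstar hST hST' hw

lemma starGraph_adj_iff_inter_nonempty {S T : maxStars H} :
    (_root_.starGraph H).Adj S T ↔ S ≠ T ∧ ((S : Set V) ∩ T).Nonempty := by
  simp [_root_.starGraph, Set.inter_comm (T : Set V)]

lemma starGraph_exists_adj_ne [Finite V] {S T R : maxStars H}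
    (hST : (_root_.starGraph H).Adj S T) (hTR : (_root_.starGraph H).Adj T R) (hRS : R ≠ S) :
    ∃ Z, (_root_.starGraph H).Adj S Z ∧ Z ≠ T := by
  rw [starGraph_adj_iff_inter_nonempty] at hST hTR
  obtain ⟨Z, hZ, hZS, hZT, hZS'⟩ := exists_maxStar_inter_nonempty S.2 T.2.1 R.2
    (Subtype.coe_ne_coe.2 hST.1) (Subtype.coe_ne_coe.2 hRS) (Subtype.coe_ne_coe.2 hTR.1.symm)
    hST.2 (Set.inter_comm _ _ ▸ hTR.2)
  refine ⟨⟨Z, hZ⟩, starGraph_adj_iff_inter_nonempty.2 ⟨?_, Set.inter_comm _ _ ▸ hZS'⟩,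
    ?_⟩
  · rintro rfl
    exact hZS rfl
  · rintro rfl
    exact hZT rfl

end

/-- Every connected star graph on at least three vertices has minimum degree at least two. -/
theorem stmt8 {V : Type*} [Fintype V] (H : SimpleGraph V)
    (hconn : (_root_.starGraph H).Connected) (h3 : 3 ≤ (maxStars H).ncard) :
    ∀ x : ↥(maxStars H), 2 ≤ ((_root_.starGraph H).neighborSet x).ncard := by
  intro x
  rw [← Nat.card_coe_set_eq] at h3
  have : Nontrivial (maxStars H) := Finite.one_lt_card_iff_nontrivial.1 (by omega)
  obtain ⟨T, hxT⟩ := hconn.preconnected.exists_adj_of_nontrivial x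
  obtain ⟨R, -, hR⟩ := Set.exists_mem_notMem_of_ncard_lt_ncard (s := {x, T}) (t := Set.univ)
    ((Set.ncard_insert_le x {T}).trans_lt (by rw [Set.ncard_singleton, Set.ncard_univ]; omega))
  -- a walk from `x` to `R` leaves `{x, T}` either at `x` or at `T`
  obtain ⟨d, -, hd, hdR⟩ :=
    (hconn.preconnected x R).some.exists_boundary_dart {x, T} (by simp) hR
  obtain ⟨Z, hxZ, hZT⟩ : ∃ Z, (_root_.starGraph H).Adj x Z ∧ Z ≠ T := by
    rcases hd with h | h
    · exact ⟨d.snd, h ▸ d.adj, fun e => hdR (by simp [e])⟩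
    · exact starGraph_exists_adj_ne hxT (h ▸ d.adj) (fun e => hdR (by simp [e]))
  exact (Set.one_lt_ncard_iff).2 ⟨T, Z, hxT, hxZ, hZT.symm⟩
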